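/- arXiv:1308.3307 — 6 statements merged into one kernel-verified Lean document; each statement's English description precedes it below -/
import Mathlib

section
/- Let f : ℝⁿ → [-∞,+∞] be a level convex function. Then the lower semicontinuous envelope lsc f of f is again level convex. -/
open Set

/-- A function on `ℝⁿ` with values in a linear order is *level convex* if
`f (t ξ + (1-t) η) ≤ max (f ξ) (f η)` for all `ξ, η` and `t ∈ [0,1]`. -/
def LevelConvex {n : ℕ} {β : Type*} [LinearOrder β]
    (f : EuclideanSpace ℝ (Fin n) → β) : Prop :=
  ∀ ξ η : EuclideanSpace ℝ (Fin n), ∀ t ∈ Set.Icc (0 : ℝ) 1,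
    f (t • ξ + (1 - t) • η) ≤ max (f ξ) (f η)

/-- The lower semicontinuous envelope of `f : ℝⁿ → [-∞,+∞]`, i.e. the supremum of all
lower semicontinuous functions below `f`. -/
noncomputable def lscEnv {n : ℕ} (f : EuclideanSpace ℝ (Fin n) → EReal) :
    EuclideanSpace ℝ (Fin n) → EReal :=
  fun ξ => ⨆ (g : EuclideanSpace ℝ (Fin n) → EReal)
    (_ : LowerSemicontinuous g ∧ g ≤ f), g ξ

lemma lscEnv_lsc {n : ℕ} (f : EuclideanSpace ℝ (Fin n) → EReal) :
    LowerSemicontinuous (lscEnv f) :=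
  lowerSemicontinuous_biSup fun _ hg => hg.1

lemma lscEnv_le {n : ℕ} (f : EuclideanSpace ℝ (Fin n) → EReal) :
    lscEnv f ≤ f := fun x => iSup₂_le fun _ hg => hg.2 x

/-- If `lscEnv f x < c`, then `x` is in the closure of the strict sublevel set of `f`. -/
lemma mem_closure_of_lscEnv_lt {n : ℕ} {f : EuclideanSpace ℝ (Fin n) → EReal}
    {x : EuclideanSpace ℝ (Fin n)} {c : EReal} (h : lscEnv f x < c) :
    x ∈ closure {y | f y < c} := by
  classical
  by_contra hx
  set U : Set (EuclideanSpace ℝ (Fin n)) := (closure {y | f y < c})ᶜ with hU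
  have hUopen : IsOpen U := isClosed_closure.isOpen_compl
  set g : EuclideanSpace ℝ (Fin n) → EReal := fun y => if y ∈ U then c else ⊥ with hg
  have hglsc : LowerSemicontinuous g := by
    intro z y hy
    by_cases hz : z ∈ U
    · filter_upwards [hUopen.mem_nhds hz] with w hw
      simpa [hg, hw] using by simpa [hg, hz] using hy
    · simp [hg, hz] at hy
  have hgle : g ≤ f := by
    intro y
    by_cases hy : y ∈ U
    · have : f y ∉ Set.Iio c := by
        intro hyc
        exact hy (subset_closure hyc)
      simp only [Set.mem_Iio, not_lt] at this
      simpa [hg, hy] using this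
    · simp [hg, hy]
  have : g x ≤ lscEnv f x := le_iSup₂_of_le g ⟨hglsc, hgle⟩ le_rfl
  have hxU : x ∈ U := hx
  rw [hg] at this
  simp only [if_pos hxU] at this
  exact absurd (lt_of_le_of_lt this h) (lt_irrefl c)

/-- If `f : ℝⁿ → [-∞,+∞]` is level convex, then its lower semicontinuous envelope
is again level convex. -/
theorem levelConvex_lscEnv {n : ℕ} (f : EuclideanSpace ℝ (Fin n) → EReal)
    (hf : LevelConvex f) : LevelConvex (lscEnv f) := by
  intro ξ η t ht
  apply le_of_forall_gt_imp_ge_of_dense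
  intro c hc
  have hξ : lscEnv f ξ < c := lt_of_le_of_lt (le_max_left _ _) hc
  have hη : lscEnv f η < c := lt_of_le_of_lt (le_max_right _ _) hc
  set S : Set (EuclideanSpace ℝ (Fin n)) := {y | f y < c} with hS
  have hconv : Convex ℝ S := by
    intro y hy z hz a b ha hb hab
    have h1b : b = 1 - a := by linarith
    have := hf y z a ⟨ha, by linarith⟩
    rw [h1b]
    exact lt_of_le_of_lt this (max_lt hy hz)
  have hm : t • ξ + (1 - t) • η ∈ closure S :=
    hconv.closure (mem_closure_of_lscEnv_lt hξ) (mem_closure_of_lscEnv_lt hη)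
      ht.1 (by linarith [ht.2]) (by ring)
  -- closure S ⊆ {y | lscEnv f y ≤ c}, which is closed since lscEnv f is lsc
  have hclosed : IsClosed {y | lscEnv f y ≤ c} := by
    have := (lowerSemicontinuous_iff_isClosed_preimage.1 (lscEnv_lsc f)) c
    simpa [Set.preimage, Set.Iic] using this
  have hsub : S ⊆ {y | lscEnv f y ≤ c} := fun y hy =>
    le_of_lt (lt_of_le_of_lt (lscEnv_le f y) hy)
  exact (hclosed.closure_subset_iff.2 hsub) hm
end

section
/- A Borel measurable function f : ℝⁿ → ℝ is level convex if and only if it satisfies the supremal Jensen inequality: f(∫_Ω φ dμ) ≤ μ-ess sup_{x∈Ω} f(φ(x)) for every probability measure μ on ℝ^d supported on an open set Ω ⊆ ℝ^d and every φ ∈ L¹_μ(Ω; ℝⁿ). -/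
/-!
In finite dimensions the barycentre `b` of a probability measure carried by a convex set `s`
lies in `s` even if `s` is not closed. Indeed `b` lies in the affine span of `s`; if `b ∉ s`, a
hyperplane through `b` properly separates it from `s`, the measure must then be carried by the
trace of `s` on that hyperplane, which has smaller dimension, and induction applies.
For level convex `f` the sublevel set `{f ≤ ess sup f ∘ φ}` is convex and carries the law of
`φ`, which gives the supremal Jensen inequality. Conversely, Jensen for the Bernoulli measure with
weights `t, 1 - t` at `ξ, η` is exactly level convexity at `(ξ, η, t)`.
-/

open Set MeasureTheory

open scoped Pointwise
open ProbabilityTheory unitInterval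

theorem LinearMap.eq_zero_of_bddAbove_image {𝕜 E : Type*} [Field 𝕜] [LinearOrder 𝕜]
    [IsStrictOrderedRing 𝕜] [AddCommGroup E] [Module 𝕜 E] (ℓ : E →ₗ[𝕜] 𝕜)
    {W : Submodule 𝕜 E} (h : BddAbove (ℓ '' W)) {w : E} (hw : w ∈ W) : ℓ w = 0 := by
  obtain ⟨c, hc⟩ := h
  by_contra hℓw
  have := hc ⟨((c + 1) / ℓ w) • w, W.smul_mem _ hw, rfl⟩
  rw [map_smul, smul_eq_mul, div_mul_cancel₀ _ hℓw] at this
  linarith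

theorem finrank_vectorSpan_inter_preimage_lt {K V : Type*} [Field K] [AddCommGroup V]
    [Module K V] [FiniteDimensional K V] {s : Set V} (ℓ : V →ₗ[K] K) {c : K} {y z : V}
    (hy : y ∈ s) (hz : z ∈ s) (hℓz : ℓ z = c) (hℓy : ℓ y ≠ c) :
    Module.finrank K (vectorSpan K (s ∩ ℓ ⁻¹' {c})) < Module.finrank K (vectorSpan K s) := by
  have hker : vectorSpan K (s ∩ ℓ ⁻¹' {c}) ≤ LinearMap.ker ℓ := by
    rw [vectorSpan_def, Submodule.span_le]
    rintro _ ⟨x, ⟨-, hx⟩, x', ⟨-, hx'⟩, rfl⟩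
    simp_all
  refine Submodule.finrank_lt_finrank_of_lt (lt_of_le_of_ne
    (vectorSpan_mono K inter_subset_left) fun heq => hℓy ?_)
  have := hker (heq ▸ vsub_mem_vectorSpan K hy hz)
  simp_all [sub_eq_zero]

section FiniteDimensional

variable {E : Type*} [NormedAddCommGroup E] [NormedSpace ℝ E] [FiniteDimensional ℝ E]

theorem Convex.exists_properly_separating_of_mem_affineSpan {s : Set E} {b : E}
    (hs : Convex ℝ s) (hb : b ∈ affineSpan ℝ s) (hbs : b ∉ s) :
    ∃ ℓ : StrongDual ℝ E, (∀ x ∈ s, ℓ x ≤ ℓ b) ∧ ∃ y ∈ s, ℓ y < ℓ b := by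
  -- Thickening `s` by a complement of its direction gives a convex set with nonempty interior
  -- that still misses `b`.
  obtain ⟨W, hW⟩ := Submodule.exists_isCompl (vectorSpan ℝ s)
  set S := s + (W : Set E)
  have hS : Convex ℝ S := hs.add W.convex
  have hsS : s ⊆ S := subset_add_left s W.zero_mem
  have hbS : b ∉ S := by
    rintro ⟨x, hx, w, hw, rfl⟩
    have hwV : w ∈ vectorSpan ℝ s := by
      simpa [← direction_affineSpan] using
        AffineSubspace.vsub_mem_direction hb (subset_affineSpan ℝ s hx)
    obtain rfl : w = 0 := (Submodule.disjoint_def.1 hW.disjoint) w hwV hw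
    exact hbs (by simpa using hx)
  have hSint : (interior S).Nonempty := by
    obtain ⟨x₀, hx₀⟩ := (affineSpan_nonempty ℝ).1 ⟨b, hb⟩
    rw [hS.interior_nonempty_iff_affineSpan_eq_top,
      ← AffineSubspace.direction_eq_top_iff_of_nonempty
        ((affineSpan_nonempty ℝ).2 ⟨x₀, hsS hx₀⟩), direction_affineSpan, eq_top_iff,
      ← hW.sup_eq_top]
    refine sup_le (vectorSpan_mono ℝ hsS) fun w hw => ?_
    simpa using vsub_mem_vectorSpan ℝ (show x₀ + w ∈ S from add_mem_add hx₀ hw) (hsS hx₀)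
  obtain ⟨ℓ, hℓ⟩ := geometric_hahn_banach_open_point hS.interior isOpen_interior
    fun h => hbS (interior_subset h)
  have hle : ∀ x ∈ S, ℓ x ≤ ℓ b := fun x hx =>
    closure_minimal (fun z hz => (hℓ z hz).le) (isClosed_Iic.preimage ℓ.continuous)
      (hS.closure_interior_eq_closure_of_nonempty_interior hSint ▸ subset_closure hx)
  obtain ⟨z, hz⟩ := hSint
  obtain ⟨y, hy, w, hw, rfl⟩ := interior_subset hz
  have hℓW : BddAbove ((ℓ : E →ₗ[ℝ] ℝ) '' W) :=
    ⟨ℓ b - ℓ y, forall_mem_image.2 fun w' hw' => by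
      simpa [le_sub_iff_add_le'] using hle _ (add_mem_add hy hw')⟩
  have hℓw : ℓ w = 0 := (ℓ : E →ₗ[ℝ] ℝ).eq_zero_of_bddAbove_image hℓW hw
  exact ⟨ℓ, fun x hx => hle x (hsS hx), y, hy, by simpa [hℓw] using hℓ _ hz⟩

theorem Convex.integral_mem_of_finiteDimensional {α : Type*} [MeasurableSpace α]
    {μ : Measure α} [IsProbabilityMeasure μ] {s : Set E} {f : α → E} (hs : Convex ℝ s)
    (hf : ∀ᵐ x ∂μ, f x ∈ s) (hfi : Integrable f μ) : ∫ x, f x ∂μ ∈ s := by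
  induction hk : Module.finrank ℝ (vectorSpan ℝ s) using Nat.strong_induction_on
    generalizing s with
  | _ k ih =>
  set b := ∫ x, f x ∂μ
  by_contra hbs
  have hb : b ∈ affineSpan ℝ s :=
    (affineSpan ℝ s).convex.integral_mem
      ((affineSpan ℝ s).isClosed_direction_iff.1 (Submodule.closed_of_finiteDimensional _))
      (hf.mono fun x hx => subset_affineSpan ℝ s hx) hfi
  obtain ⟨ℓ, hℓs, y, hy, hℓy⟩ := hs.exists_properly_separating_of_mem_affineSpan hb hbs
  have hℓf : ∀ᵐ x ∂μ, ℓ (f x) = ℓ b := by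
    have hle : (fun x => ℓ (f x)) ≤ᵐ[μ] fun _ => ℓ b := hf.mono fun x hx => hℓs _ hx
    refine (integral_eq_iff_of_ae_le (ℓ.integrable_comp hfi) (integrable_const _) hle).1 ?_
    rw [ℓ.integral_comp_comm hfi, integral_const, probReal_univ, one_smul]
  have hf' : ∀ᵐ x ∂μ, f x ∈ s ∩ ℓ ⁻¹' {ℓ b} := hf.and hℓf
  obtain ⟨x₀, hx₀⟩ := hf'.exists
  have hlt :=
    finrank_vectorSpan_inter_preimage_lt (ℓ : E →ₗ[ℝ] ℝ) hy hx₀.1 hx₀.2 hℓy.ne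
  have hs' : Convex ℝ (s ∩ ℓ ⁻¹' {ℓ b}) :=
    hs.inter ((convex_singleton _).linear_preimage _)
  exact hbs (ih _ (hk ▸ hlt) hs' hf' rfl).1

end FiniteDimensional

theorem essSup_bernoulliMeasure_le {X β : Type*} [MeasurableSpace X]
    [MeasurableSingletonClass X] [CompleteLinearOrder β] (g : X → β) (x y : X) (p : I) :
    essSup g Ber(x, y, p) ≤ max (g x) (g y) := by
  refine essSup_le_of_ae_le _ ?_
  rw [Filter.EventuallyLE, bernoulliMeasure_def, ae_add_measure_iff]
  refine ⟨Measure.ae_smul_measure ?_ _, Measure.ae_smul_measure ?_ _⟩ <;> simp [ae_dirac_eq]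

namespace LevelConvex

variable {n : ℕ}

theorem monotone_comp {β γ : Type*} [LinearOrder β] [LinearOrder γ]
    {f : EuclideanSpace ℝ (Fin n) → β} {g : β → γ} (hg : Monotone g) (hf : LevelConvex f) :
    LevelConvex (g ∘ f) := fun ξ η t ht =>
  (hg (hf ξ η t ht)).trans_eq hg.map_max

theorem convex_setOf_le {β : Type*} [LinearOrder β] {f : EuclideanSpace ℝ (Fin n) → β}
    (hf : LevelConvex f) (c : β) : Convex ℝ {ξ | f ξ ≤ c} := by
  intro ξ hξ η hη a b ha hb hab
  obtain rfl : b = 1 - a := by linarith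
  exact (hf ξ η a ⟨ha, by linarith⟩).trans (max_le hξ hη)

theorem map_integral_le_essSup {β : Type*} [CompleteLinearOrder β] [TopologicalSpace β]
    [FirstCountableTopology β] [OrderTopology β] {f : EuclideanSpace ℝ (Fin n) → β}
    (hf : LevelConvex f) {α : Type*} [MeasurableSpace α] {μ : Measure α}
    [IsProbabilityMeasure μ] {φ : α → EuclideanSpace ℝ (Fin n)} (hφ : Integrable φ μ) :
    f (∫ x, φ x ∂μ) ≤ essSup (fun x => f (φ x)) μ :=
  (hf.convex_setOf_le (essSup (fun x => f (φ x)) μ)).integral_mem_of_finiteDimensional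
    ae_le_essSup hφ

end LevelConvex

theorem levelConvex_iff_supremal_jensen_general {n : ℕ}
    (f : EuclideanSpace ℝ (Fin n) → ℝ) :
    LevelConvex f ↔
      ∀ (d : ℕ) (Ω : Set (EuclideanSpace ℝ (Fin d)))
        (μ : Measure (EuclideanSpace ℝ (Fin d))),
        IsOpen Ω → IsProbabilityMeasure μ → μ Ωᶜ = 0 →
        ∀ φ : EuclideanSpace ℝ (Fin d) → EuclideanSpace ℝ (Fin n),
          Integrable φ μ →
          (f (∫ x, φ x ∂μ) : EReal) ≤ essSup (fun x => (f (φ x) : EReal)) μ := by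
  refine ⟨fun hf d Ω μ _ _ _ φ hφ => ?_, fun h ξ η t ht => ?_⟩
  · exact (hf.monotone_comp EReal.coe_strictMono.monotone).map_integral_le_essSup hφ
  · have hJensen := h n univ Ber(ξ, η, ⟨t, ht⟩) isOpen_univ inferInstance (by simp) id
      (integrable_bernoulliMeasure _ _ _ _)
    rw [integral_bernoulliMeasure] at hJensen
    exact EReal.coe_le_coe_iff.1 <| (hJensen.trans (essSup_bernoulliMeasure_le _ _ _ _)).trans_eq
      (by norm_cast)

/-- A Borel measurable `f : ℝⁿ → ℝ` is level convex if and only if it satisfies the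
supremal Jensen inequality `f (∫_Ω φ dμ) ≤ μ-ess sup_{x ∈ Ω} f (φ x)` for every
probability measure `μ` on `ℝ^d` supported on an open set `Ω ⊆ ℝ^d` and every
`φ ∈ L¹_μ(Ω; ℝⁿ)`. -/
theorem levelConvex_iff_supremal_jensen {n : ℕ}
    (f : EuclideanSpace ℝ (Fin n) → ℝ) (hf : Measurable f) :
    LevelConvex f ↔
      ∀ (d : ℕ) (Ω : Set (EuclideanSpace ℝ (Fin d)))
        (μ : Measure (EuclideanSpace ℝ (Fin d))),
        IsOpen Ω → IsProbabilityMeasure μ → μ Ωᶜ = 0 →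
        ∀ φ : EuclideanSpace ℝ (Fin d) → EuclideanSpace ℝ (Fin n),
          Integrable φ μ →
          (f (∫ x, φ x ∂μ) : EReal) ≤ essSup (fun x => (f (φ x) : EReal)) μ :=
  levelConvex_iff_supremal_jensen_general f
end

section
/- Let f : ℝⁿ → (-∞,+∞] be a function whose level convex envelope satisfies f^lc > -∞ everywhere. Then for every ξ ∈ ℝⁿ, f^lc(ξ) = inf{ max_{1≤i≤n+1} f(ξ_i) : ξ = Σ_{i=1}^{n+1} λ_i ξ_i, λ_i ≥ 0, Σ_{i=1}^{n+1} λ_i = 1 }, the infimum being taken over all representations of ξ as a convex combination of n+1 points ξ_1,…,ξ_{n+1} ∈ ℝⁿ. -/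
open Set

/-- The level convex envelope of `f : ℝⁿ → [-∞,+∞]`. -/
noncomputable def lcEnv {n : ℕ} (f : EuclideanSpace ℝ (Fin n) → EReal) :
    EuclideanSpace ℝ (Fin n) → EReal :=
  fun ξ => ⨆ (g : EuclideanSpace ℝ (Fin n) → EReal)
    (_ : LevelConvex g ∧ g ≤ f), g ξ

/-- Padding a sum over `Fin k` to a sum over `Fin m` with zeros. -/
lemma sum_pad {M : Type*} [AddCommMonoid M] {k m : ℕ} (hk : k ≤ m) (F : Fin k → M) :
    ∑ i : Fin m, (if h : (i : ℕ) < k then F ⟨i, h⟩ else 0) = ∑ i : Fin k, F i := by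
  rw [Fin.sum_univ_eq_sum_range (fun i : ℕ => if h : i < k then F ⟨i, h⟩ else 0) m,
    ← Finset.sum_subset (Finset.range_subset_range.2 hk)
      (fun i _ hi => dif_neg (by simpa using hi)),
    ← Fin.sum_univ_eq_sum_range (fun i : ℕ => if h : i < k then F ⟨i, h⟩ else 0) k]
  exact Finset.sum_congr rfl fun i _ => by simp

/-- Sublevel sets of a level convex function are convex. -/
lemma levelConvex_sublevel {n : ℕ} {g : EuclideanSpace ℝ (Fin n) → EReal}
    (hg : LevelConvex g) (c : EReal) : Convex ℝ {x | g x ≤ c} := by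
  intro x hx y hy a b ha hb hab
  have hb' : b = 1 - a := by linarith
  have := hg x y a ⟨ha, by linarith⟩
  rw [← hb'] at this
  exact this.trans (max_le hx hy)

/-- A convex combination lies in the convex hull of the points. -/
lemma mem_convexHull_of_rep {n m : ℕ} (ξs : Fin m → EuclideanSpace ℝ (Fin n))
    (l : Fin m → ℝ) (hl : ∀ i, 0 ≤ l i) (hsum : ∑ i, l i = 1) :
    (∑ i, l i • ξs i) ∈ convexHull ℝ (Set.range ξs) := by
  have := Finset.centerMass_mem_convexHull (Finset.univ (α := Fin m))
    (fun i _ => hl i) (by rw [hsum]; norm_num) (fun i _ => Set.mem_range_self (f := ξs) i)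
  rwa [Finset.centerMass_eq_of_sum_1 _ _ hsum] at this

/-- Jensen-type inequality for level convex functions. -/
lemma levelConvex_le_iSup {n m : ℕ} {g : EuclideanSpace ℝ (Fin n) → EReal}
    (hg : LevelConvex g) (ξs : Fin m → EuclideanSpace ℝ (Fin n))
    (l : Fin m → ℝ) (hl : ∀ i, 0 ≤ l i) (hsum : ∑ i, l i = 1) :
    g (∑ i, l i • ξs i) ≤ ⨆ i, g (ξs i) := by
  have hmem := mem_convexHull_of_rep ξs l hl hsum
  have hsub : convexHull ℝ (Set.range ξs) ⊆ {x | g x ≤ ⨆ i, g (ξs i)} := by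
    apply convexHull_min
    · rintro x ⟨i, rfl⟩
      exact le_iSup (fun i => g (ξs i)) i
    · exact levelConvex_sublevel hg _
  exact hsub hmem

/-- Carathéodory: a point of a convex hull in `ℝⁿ` is a convex combination
of `n+1` points of the set. -/
lemma exists_caratheodory_rep {n : ℕ} {s : Set (EuclideanSpace ℝ (Fin n))}
    {x : EuclideanSpace ℝ (Fin n)} (hs : x ∈ convexHull ℝ s) :
    ∃ (ξs : Fin (n + 1) → EuclideanSpace ℝ (Fin n)) (l : Fin (n + 1) → ℝ),
      (∀ i, 0 ≤ l i) ∧ (∑ i, l i) = 1 ∧ x = ∑ i, l i • ξs i ∧ ∀ i, ξs i ∈ s := by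
  obtain ⟨ι, hι, z, w, hzs, hai, hw, hw1, hx⟩ := eq_pos_convex_span_of_mem_convexHull hs
  have hne : Nonempty ι := by
    by_contra h
    rw [not_nonempty_iff] at h
    simp only [Finset.univ_eq_empty, Finset.sum_empty] at hw1
    exact zero_ne_one hw1
  have hcard : Fintype.card ι ≤ n + 1 := by
    refine hai.card_le_finrank_succ.trans ?_
    have h1 : Module.finrank ℝ ↥(vectorSpan ℝ (Set.range z)) ≤ n := by
      simpa using (vectorSpan ℝ (Set.range z)).finrank_le
    omega
  set k := Fintype.card ι with hk
  have hk0 : 0 < k := Fintype.card_pos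
  set e : Fin k ≃ ι := (Fintype.equivFin ι).symm with he
  refine ⟨fun i => if h : (i : ℕ) < k then z (e ⟨i, h⟩) else z (e ⟨0, hk0⟩),
    fun i => if h : (i : ℕ) < k then w (e ⟨i, h⟩) else 0, ?_, ?_, ?_, ?_⟩
  · intro i
    dsimp only
    split
    · exact (hw _).le
    · exact le_refl 0
  · rw [sum_pad hcard (fun j : Fin k => w (e j))]
    rw [Equiv.sum_comp (Fintype.equivFin ι).symm w]
    exact hw1
  · have hsummand : ∀ i : Fin (n + 1),
        (if h : (i : ℕ) < k then w (e ⟨i, h⟩) else 0) •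
          (if h : (i : ℕ) < k then z (e ⟨i, h⟩) else z (e ⟨0, hk0⟩)) =
        (if h : (i : ℕ) < k then w (e ⟨i, h⟩) • z (e ⟨i, h⟩) else 0) := by
      intro i
      split
      · rfl
      · simp
    rw [Finset.sum_congr rfl (fun i _ => hsummand i),
      sum_pad hcard (fun j : Fin k => w (e j) • z (e j)),
      Equiv.sum_comp (Fintype.equivFin ι).symm (fun j => w j • z j)]
    exact hx.symm
  · intro i
    dsimp only
    split
    · exact hzs (Set.mem_range_self _)
    · exact hzs (Set.mem_range_self _)

/-- Carathéodory-type formula for the level convex envelope: if `f : ℝⁿ → (-∞,+∞]`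
has `f^lc > -∞` everywhere, then `f^lc ξ` is the infimum of
`max_{1 ≤ i ≤ n+1} f ξᵢ` over all representations of `ξ` as a convex combination of
`n+1` points `ξ₁, …, ξ_{n+1}`. -/
theorem lcEnv_eq_sInf_caratheodory {n : ℕ} (f : EuclideanSpace ℝ (Fin n) → EReal)
    (hfbot : ∀ ξ, f ξ ≠ ⊥) (hlcbot : ∀ ξ, lcEnv f ξ ≠ ⊥) :
    ∀ ξ : EuclideanSpace ℝ (Fin n),
      lcEnv f ξ = sInf { c : EReal |
        ∃ (ξs : Fin (n + 1) → EuclideanSpace ℝ (Fin n)) (l : Fin (n + 1) → ℝ),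
          (∀ i, 0 ≤ l i) ∧ (∑ i, l i) = 1 ∧ ξ = ∑ i, l i • ξs i ∧
          c = ⨆ i, f (ξs i) } := by
  set S : EuclideanSpace ℝ (Fin n) → Set EReal := fun ξ => { c : EReal |
    ∃ (ξs : Fin (n + 1) → EuclideanSpace ℝ (Fin n)) (l : Fin (n + 1) → ℝ),
      (∀ i, 0 ≤ l i) ∧ (∑ i, l i) = 1 ∧ ξ = ∑ i, l i • ξs i ∧
      c = ⨆ i, f (ξs i) } with hS
  set F : EuclideanSpace ℝ (Fin n) → EReal := fun ξ => sInf (S ξ) with hF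
  -- key: an element of S ξ from a convex hull membership
  -- F ≤ f
  have hFle : F ≤ f := by
    intro ξ
    apply sInf_le
    refine ⟨fun _ => ξ, fun i => if i = 0 then 1 else 0, ?_, ?_, ?_, ?_⟩
    · intro i; dsimp only; split <;> norm_num
    · simp
    · simp [ite_smul]
    · rw [iSup_const]
  -- F is level convex
  have hFlc : LevelConvex F := by
    intro ξ η t ht
    by_contra hcon
    rw [not_le] at hcon
    have hξlt : F ξ < F (t • ξ + (1 - t) • η) := lt_of_le_of_lt (le_max_left _ _) hcon
    have hηlt : F η < F (t • ξ + (1 - t) • η) := lt_of_le_of_lt (le_max_right _ _) hcon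
    obtain ⟨a, ha, halt⟩ := sInf_lt_iff.1 hξlt
    obtain ⟨b, hb, hblt⟩ := sInf_lt_iff.1 hηlt
    obtain ⟨ξsa, la, hla, hsa, hxa, rfl⟩ := ha
    obtain ⟨ξsb, lb, hlb, hsb, hxb, rfl⟩ := hb
    have hmem : (t • ξ + (1 - t) • η) ∈
        convexHull ℝ (Set.range ξsa ∪ Set.range ξsb) := by
      have h1 : ξ ∈ convexHull ℝ (Set.range ξsa ∪ Set.range ξsb) := by
        apply convexHull_mono Set.subset_union_left
        rw [hxa]; exact mem_convexHull_of_rep ξsa la hla hsa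
      have h2 : η ∈ convexHull ℝ (Set.range ξsa ∪ Set.range ξsb) := by
        apply convexHull_mono Set.subset_union_right
        rw [hxb]; exact mem_convexHull_of_rep ξsb lb hlb hsb
      exact (convex_convexHull ℝ _) h1 h2 ht.1 (by linarith [ht.2]) (by ring)
    obtain ⟨ξs, l, hl, hsum, hrep, hpts⟩ := exists_caratheodory_rep hmem
    have hc : (⨆ i, f (ξs i)) ∈ S (t • ξ + (1 - t) • η) :=
      ⟨ξs, l, hl, hsum, hrep, rfl⟩
    have hle : F (t • ξ + (1 - t) • η) ≤ ⨆ i, f (ξs i) := sInf_le hc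
    have hmax : (⨆ i, f (ξs i)) ≤ max (⨆ i, f (ξsa i)) (⨆ i, f (ξsb i)) := by
      apply iSup_le
      intro i
      rcases hpts i with h | h
      · obtain ⟨j, hj⟩ := h
        exact le_max_of_le_left (hj ▸ le_iSup (fun j => f (ξsa j)) j)
      · obtain ⟨j, hj⟩ := h
        exact le_max_of_le_right (hj ▸ le_iSup (fun j => f (ξsb j)) j)
    exact absurd (hle.trans hmax) (not_le.2 (max_lt halt hblt))
  intro ξ
  apply le_antisymm
  · -- lcEnv f ξ ≤ sInf (S ξ)
    apply iSup_le
    intro g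
    apply iSup_le
    intro hg
    apply le_sInf
    rintro c ⟨ξs, l, hl, hsum, hrep, rfl⟩
    calc g ξ = g (∑ i, l i • ξs i) := by rw [hrep]
    _ ≤ ⨆ i, g (ξs i) := levelConvex_le_iSup hg.1 ξs l hl hsum
    _ ≤ ⨆ i, f (ξs i) := iSup_mono fun i => hg.2 (ξs i)
  · -- sInf (S ξ) ≤ lcEnv f ξ
    exact le_iSup_of_le F (le_iSup_of_le ⟨hFlc, hFle⟩ le_rfl)
end

section
/- Let f : ℝⁿ → ℝ be a continuous function with f^lc > -∞ everywhere and lim_{|ξ|→+∞} f(ξ) = +∞. Then for every ξ ∈ ℝⁿ the infimum in the Carathéodory formula is attained, i.e. there exist λ_i ≥ 0 with Σ_{i=1}^{n+1} λ_i = 1 and ξ_i ∈ ℝⁿ with ξ = Σ_{i=1}^{n+1} λ_i ξ_i and f^lc(ξ) = max_{1≤i≤n+1} f(ξ_i); moreover f^lc is continuous on ℝⁿ, and hence f^lslc = f^lc. -/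
open Set

/-- The lower semicontinuous level convex envelope of `f : ℝⁿ → [-∞,+∞]`. -/
noncomputable def lslcEnv {n : ℕ} (f : EuclideanSpace ℝ (Fin n) → EReal) :
    EuclideanSpace ℝ (Fin n) → EReal :=
  fun ξ => ⨆ (g : EuclideanSpace ℝ (Fin n) → EReal)
    (_ : LowerSemicontinuous g ∧ LevelConvex g ∧ g ≤ f), g ξ

/-!
The strict sublevel sets of the envelope are convex hulls, `{f^lc < a} = conv {f < a}`: the
function equal to `-∞` on `conv {f < a}` and to `a` elsewhere is level convex and below `f`.
For continuous `f` these sets are open, so `f^lc` is upper semicontinuous.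

For coercive `f` the sets `{f ≤ r}` are compact. By Carathéodory, `conv K` is the image of the
compact set `Δₙ × Kⁿ⁺¹` under `(w, z) ↦ ∑ wᵢ zᵢ`; hence it is compact, and (Cantor's intersection
theorem in the space of representations) taking convex hulls commutes with directed
intersections of compact sets. Therefore `{f^lc ≤ r} = ⋂_{a > r} conv {f < a} = conv {f ≤ r}`,
which gives lower semicontinuity and, through Carathéodory once more, a representation of `ξ` by
`n + 1` points with `max f(ξᵢ) = f^lc(ξ)`.
-/

section Caratheodory

variable {E : Type*} [AddCommGroup E] [Module ℝ E] {ι : Type*} [Fintype ι]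

def weightedSum (p : (ι → ℝ) × (ι → E)) : E := ∑ i, p.1 i • p.2 i

theorem continuous_weightedSum [TopologicalSpace E] [ContinuousAdd E] [ContinuousSMul ℝ E] :
    Continuous (weightedSum : (ι → ℝ) × (ι → E) → E) :=
  continuous_finsetSum _ fun i _ =>
    ((continuous_apply i).comp continuous_fst).smul ((continuous_apply i).comp continuous_snd)

theorem Fintype.sum_extend_zero {κ M : Type*} [Fintype κ] [AddCommMonoid M] {e : ι → κ}
    (he : Function.Injective e) (g : ι → M) : ∑ j, Function.extend e g 0 j = ∑ i, g i :=
  (Fintype.sum_of_injective e he g _ (fun j hj => Function.extend_apply' g (0 : κ → M) j hj)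
    fun i => (he.extend_apply _ _ i).symm).symm

theorem convexHull_eq_image_weightedSum [FiniteDimensional ℝ E] {n : ℕ}
    (hn : Module.finrank ℝ E ≤ n) (s : Set E) :
    convexHull ℝ s = weightedSum '' (stdSimplex ℝ (Fin (n + 1)) ×ˢ univ.pi fun _ => s) := by
  refine Subset.antisymm (fun x hx => ?_) ?_
  · obtain ⟨κ, _, z, w, hzs, hz, hw0, hw1, rfl⟩ := eq_pos_convex_span_of_mem_convexHull hx
    have hcard : Fintype.card κ ≤ Fintype.card (Fin (n + 1)) := by
      rw [Fintype.card_fin]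
      exact hz.card_le_finrank_succ.trans (Nat.succ_le_succ ((Submodule.finrank_le _).trans hn))
    obtain ⟨e⟩ := Function.Embedding.nonempty_of_card_le hcard
    obtain ⟨i₀⟩ : Nonempty κ := by
      by_contra h
      rw [not_nonempty_iff] at h
      simp at hw1
    classical
    -- pad the at most `n + 1` Carathéodory points along `e`, with weight `0` off its range
    refine ⟨(Function.extend e w 0, Function.extend e z fun _ => z i₀),
      ⟨⟨fun j => ?_, (Fintype.sum_extend_zero e.injective w).trans hw1⟩, fun j _ => ?_⟩, ?_⟩
    · dsimp only
      rw [Function.extend_def]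
      split_ifs
      exacts [(hw0 _).le, le_rfl]
    · dsimp only
      rw [Function.extend_def]
      split_ifs
      exacts [hzs (mem_range_self _), hzs (mem_range_self i₀)]
    · rw [weightedSum, ← Fintype.sum_extend_zero e.injective]
      refine Finset.sum_congr rfl fun j _ => ?_
      simp only [Function.extend_def]
      split_ifs <;> simp
  · rintro _ ⟨⟨w, z⟩, ⟨hw, hz⟩, rfl⟩
    exact (convex_convexHull ℝ s).sum_mem (fun i _ => hw.1 i) hw.2
      fun i _ => subset_convexHull ℝ s (hz i trivial)

variable [FiniteDimensional ℝ E] [TopologicalSpace E] [ContinuousAdd E] [ContinuousSMul ℝ E]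

theorem IsCompact.convexHull {s : Set E} (hs : IsCompact s) : IsCompact (convexHull ℝ s) := by
  rw [convexHull_eq_image_weightedSum le_rfl]
  exact ((isCompact_stdSimplex ℝ _).prod (isCompact_univ_pi fun _ => hs)).image
    continuous_weightedSum

theorem iInter_convexHull_subset_convexHull_iInter [T2Space E] {κ : Type*} [Nonempty κ]
    {K : κ → Set E} (hdir : Directed (· ⊇ ·) K) (hK : ∀ i, IsCompact (K i)) :
    ⋂ i, convexHull ℝ (K i) ⊆ convexHull ℝ (⋂ i, K i) := by
  intro x hx
  rw [mem_iInter] at hx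
  simp only [convexHull_eq_image_weightedSum le_rfl] at hx ⊢
  let reps (S : Set E) :=
    (stdSimplex ℝ (Fin (Module.finrank ℝ E + 1)) ×ˢ univ.pi fun _ => S) ∩ weightedSum ⁻¹' {x}
  have hreps : ∀ i, IsCompact (reps (K i)) := fun i =>
    ((isCompact_stdSimplex ℝ _).prod (isCompact_univ_pi fun _ => hK i)).inter_right
      (isClosed_singleton.preimage continuous_weightedSum)
  have hdir' : Directed (· ⊇ ·) (reps ∘ K) := hdir.mono_comp _ fun _ _ hST =>
    inter_subset_inter_left _ (prod_mono le_rfl (pi_mono fun _ _ => hST))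
  obtain ⟨p, hp⟩ := IsCompact.nonempty_iInter_of_directed_nonempty_isCompact_isClosed _ hdir'
    (fun i => hx i) hreps fun i => (hreps i).isClosed
  rw [mem_iInter] at hp
  obtain ⟨i₀⟩ := ‹Nonempty κ›
  exact ⟨p, ⟨(hp i₀).1.1, fun j _ => mem_iInter.2 fun i => (hp i).1.2 j trivial⟩, (hp i₀).2⟩

end Caratheodory

section LevelConvex

variable {n : ℕ}

theorem LevelConvex.quasiconvexOn {β : Type*} [LinearOrder β]
    {g : EuclideanSpace ℝ (Fin n) → β} (hg : LevelConvex g) : QuasiconvexOn ℝ univ g :=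
  quasiconvexOn_iff_le_max.2 ⟨convex_univ, fun x _ y _ a b ha hb hab => by
    simpa only [← eq_sub_of_add_eq' hab] using hg x y a ⟨ha, by linarith⟩⟩

theorem LevelConvex.convex_setOf_le_s4 {β : Type*} [LinearOrder β]
    {g : EuclideanSpace ℝ (Fin n) → β} (hg : LevelConvex g) (c : β) :
    Convex ℝ {x | g x ≤ c} := by
  simpa only [sep_univ] using hg.quasiconvexOn c

theorem LevelConvex.convex_setOf_lt {β : Type*} [LinearOrder β]
    {g : EuclideanSpace ℝ (Fin n) → β} (hg : LevelConvex g) (c : β) :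
    Convex ℝ {x | g x < c} := by
  simpa only [sep_univ] using hg.quasiconvexOn.convex_lt c

theorem Convex.levelConvex_ite {β : Type*} [LinearOrder β]
    {C : Set (EuclideanSpace ℝ (Fin n))} [DecidablePred (· ∈ C)] (hC : Convex ℝ C) {a b : β}
    (hba : b ≤ a) :
    LevelConvex fun x => if x ∈ C then b else a := by
  intro ξ η t ht
  by_cases hξη : t • ξ + (1 - t) • η ∈ C
  · simp only [hξη, if_true]
    split_ifs <;> simp [hba]
  · have : ξ ∉ C ∨ η ∉ C := by
      by_contra! h
      exact hξη (hC h.1 h.2 ht.1 (sub_nonneg.2 ht.2) (add_sub_cancel t 1))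
    rcases this with h | h <;> simp [hξη, h]

variable {f : EuclideanSpace ℝ (Fin n) → EReal}

theorem lcEnv_le : lcEnv f ≤ f := fun _ => iSup₂_le fun _ hg => hg.2 _

theorem le_lcEnv {g : EuclideanSpace ℝ (Fin n) → EReal} (hg : LevelConvex g) (hgf : g ≤ f) :
    g ≤ lcEnv f := fun _ => le_iSup₂_of_le g ⟨hg, hgf⟩ le_rfl

theorem levelConvex_lcEnv : LevelConvex (lcEnv f) := fun ξ η t ht =>
  iSup₂_le fun _ hg => (hg.1 ξ η t ht).trans <|
    max_le_max (le_lcEnv hg.1 hg.2 ξ) (le_lcEnv hg.1 hg.2 η)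

theorem convexHull_subset_setOf_lcEnv_le (c : EReal) :
    convexHull ℝ {x | f x ≤ c} ⊆ {ξ | lcEnv f ξ ≤ c} :=
  convexHull_min (fun x hx => (lcEnv_le x).trans hx) (levelConvex_lcEnv.convex_setOf_le_s4 c)

theorem lcEnv_lt_iff_mem_convexHull {ξ : EuclideanSpace ℝ (Fin n)} {a : EReal} :
    lcEnv f ξ < a ↔ ξ ∈ convexHull ℝ {x | f x < a} := by
  refine ⟨fun h => ?_, fun h => ?_⟩
  · classical
    by_contra hξ
    let C := convexHull ℝ {x | f x < a}
    have hle : (fun x => if x ∈ C then ⊥ else a) ≤ f := fun x => by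
      by_cases hx : x ∈ C
      · simp [hx]
      · simpa [hx] using fun hfx => hx (subset_convexHull ℝ _ hfx)
    have := le_lcEnv ((convex_convexHull ℝ _).levelConvex_ite bot_le) hle ξ
    simp only [hξ, if_false] at this
    exact this.not_gt h
  · exact convexHull_min (fun x hx => (lcEnv_le x).trans_lt hx)
      (levelConvex_lcEnv.convex_setOf_lt a) h

theorem upperSemicontinuous_lcEnv (hf : Continuous f) : UpperSemicontinuous (lcEnv f) := by
  refine upperSemicontinuous_iff_isOpen_preimage.2 fun a => ?_
  have : lcEnv f ⁻¹' Iio a = convexHull ℝ {x | f x < a} :=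
    ext fun _ => lcEnv_lt_iff_mem_convexHull
  rw [this]
  exact (isOpen_lt hf continuous_const).convexHull

theorem lslcEnv_eq_lcEnv (h : LowerSemicontinuous (lcEnv f)) : lslcEnv f = lcEnv f :=
  funext fun ξ => le_antisymm
    (iSup₂_le fun _ hg => le_lcEnv hg.2.1 hg.2.2 ξ)
    (le_iSup₂_of_le (lcEnv f) ⟨h, levelConvex_lcEnv, lcEnv_le⟩ le_rfl)

end LevelConvex

theorem isCompact_setOf_le_of_coercive {E : Type*} [NormedAddCommGroup E] [ProperSpace E]
    {f : E → ℝ} (hf : Continuous f) (hcoer : ∀ M : ℝ, ∃ R : ℝ, ∀ x : E, R ≤ ‖x‖ → M ≤ f x)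
    (r : ℝ) : IsCompact {x | f x ≤ r} := by
  obtain ⟨R, hR⟩ := hcoer (r + 1)
  refine (isCompact_closedBall 0 R).of_isClosed_subset (isClosed_le hf continuous_const)
    fun x hx => mem_closedBall_zero_iff.2 (le_of_not_ge fun h => ?_)
  linarith [hR x h, show f x ≤ r from hx]

section CompactSublevels

variable {n : ℕ} {f : EuclideanSpace ℝ (Fin n) → EReal}

theorem mem_convexHull_of_lcEnv_le (hK : ∀ r : ℝ, IsCompact {x | f x ≤ r})
    {ξ : EuclideanSpace ℝ (Fin n)} {c : ℝ} (hc : lcEnv f ξ ≤ c) :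
    ξ ∈ convexHull ℝ {x | f x ≤ c} := by
  have hc' : {x | f x ≤ c} = ⋂ a : Ioi c, {x | f x ≤ (a : ℝ)} := by
    ext x
    simp only [mem_ofPred_eq, mem_iInter, Subtype.forall, mem_Ioi, ← EReal.coe_lt_coe_iff]
    exact EReal.le_of_forall_lt_iff_le.symm
  have hξ : ξ ∈ ⋂ a : Ioi c, convexHull ℝ {x | f x ≤ (a : ℝ)} := mem_iInter.2 fun a =>
    convexHull_mono (fun x (hx : f x < a) => hx.le)
      (lcEnv_lt_iff_mem_convexHull.1 (hc.trans_lt (EReal.coe_lt_coe_iff.2 a.2)))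
  rw [hc']
  exact iInter_convexHull_subset_convexHull_iInter
    (K := fun a : Ioi c => {x | f x ≤ (a : ℝ)})
    (Monotone.directed_ge fun _ _ hab _ hx => hx.trans (EReal.coe_le_coe_iff.2 hab))
    (fun a => hK a) hξ

theorem setOf_lcEnv_le_eq_convexHull (hK : ∀ r : ℝ, IsCompact {x | f x ≤ r}) (c : ℝ) :
    {ξ | lcEnv f ξ ≤ c} = convexHull ℝ {x | f x ≤ c} :=
  Subset.antisymm (fun _ => mem_convexHull_of_lcEnv_le hK)
    (convexHull_subset_setOf_lcEnv_le (c : EReal))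

theorem lowerSemicontinuous_lcEnv (hK : ∀ r : ℝ, IsCompact {x | f x ≤ r}) :
    LowerSemicontinuous (lcEnv f) := by
  intro ξ y hy
  obtain ⟨r, hyr, hrξ⟩ := EReal.exists_between_coe_real hy
  have hclosed : IsClosed {ξ | lcEnv f ξ ≤ r} := by
    rw [setOf_lcEnv_le_eq_convexHull hK]
    exact (hK r).convexHull.isClosed
  filter_upwards [hclosed.isOpen_compl.mem_nhds (not_le.2 hrξ)] with ξ' hξ'
  exact hyr.trans (not_le.1 hξ')

theorem exists_lcEnv_eq_iSup (hK : ∀ r : ℝ, IsCompact {x | f x ≤ r})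
    {ξ : EuclideanSpace ℝ (Fin n)} (hbot : lcEnv f ξ ≠ ⊥) (htop : lcEnv f ξ ≠ ⊤) :
    ∃ z : Fin (n + 1) → EuclideanSpace ℝ (Fin n), ∃ w ∈ stdSimplex ℝ (Fin (n + 1)),
      ξ = ∑ i, w i • z i ∧ lcEnv f ξ = ⨆ i, f (z i) := by
  have hc := (EReal.coe_toReal htop hbot).symm
  have hξ := mem_convexHull_of_lcEnv_le hK hc.le
  rw [convexHull_eq_image_weightedSum finrank_euclideanSpace_fin.le] at hξ
  obtain ⟨⟨w, z⟩, ⟨hw, hz⟩, rfl⟩ := hξ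
  refine ⟨z, w, hw, rfl, le_antisymm ?_ (iSup_le fun i => (hz i trivial).trans hc.ge)⟩
  exact (levelConvex_lcEnv.convex_setOf_le_s4 _).sum_mem (fun i _ => hw.1 i) hw.2
    fun i _ => (lcEnv_le _).trans (le_iSup (fun i => f (z i)) i)

end CompactSublevels

/-- If `f : ℝⁿ → ℝ` is continuous, `f^lc > -∞` everywhere and `f ξ → +∞` as `|ξ| → +∞`,
then the infimum in the Carathéodory formula for `f^lc` is attained, `f^lc` is continuous,
and `f^lslc = f^lc`. -/
theorem lcEnv_min_attained_and_continuous {n : ℕ}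
    (f : EuclideanSpace ℝ (Fin n) → ℝ) (hf : Continuous f)
    (hlcbot : ∀ ξ, lcEnv (fun η => (f η : EReal)) ξ ≠ ⊥)
    (hcoer : ∀ M : ℝ, ∃ R : ℝ, ∀ ξ : EuclideanSpace ℝ (Fin n), R ≤ ‖ξ‖ → M ≤ f ξ) :
    (∀ ξ : EuclideanSpace ℝ (Fin n),
      ∃ (ξs : Fin (n + 1) → EuclideanSpace ℝ (Fin n)) (l : Fin (n + 1) → ℝ),
        (∀ i, 0 ≤ l i) ∧ (∑ i, l i) = 1 ∧ ξ = ∑ i, l i • ξs i ∧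
        lcEnv (fun η => (f η : EReal)) ξ = ⨆ i, (f (ξs i) : EReal)) ∧
    Continuous (lcEnv (fun η => (f η : EReal))) ∧
    lslcEnv (fun η => (f η : EReal)) = lcEnv (fun η => (f η : EReal)) := by
  have hK : ∀ r : ℝ, IsCompact {x | (f x : EReal) ≤ r} := fun r => by
    simpa only [EReal.coe_le_coe_iff] using isCompact_setOf_le_of_coercive hf hcoer r
  have hlsc := lowerSemicontinuous_lcEnv hK
  refine ⟨fun ξ => ?_, continuous_iff_lower_upperSemicontinuous.2
    ⟨hlsc, upperSemicontinuous_lcEnv (continuous_coe_real_ereal.comp hf)⟩, lslcEnv_eq_lcEnv hlsc⟩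
  obtain ⟨z, w, hw, hξ, hmax⟩ := exists_lcEnv_eq_iSup hK (hlcbot ξ)
    (ne_top_of_le_ne_top (EReal.coe_ne_top (f ξ)) (lcEnv_le ξ))
  exact ⟨z, w, hw.1, hw.2, hξ, hmax⟩
end

section
/- Let C ⊆ ℝⁿ be a convex set and f : C → ℝ. Then f is strictly level convex if and only if for every c in the range of f the following two conditions hold: (i) the sublevel set L_c(f) := {x ∈ C : f(x) ≤ c} is convex, and (ii) the level set R_c(f) := {x ∈ C : f(x) = c} is contained in the set of extreme points of L_c(f). -/
open Set

/-- A function `f` defined on a convex set `C ⊆ ℝⁿ` is *level convex on `C`* if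
`f (t ξ + (1-t) η) ≤ max (f ξ) (f η)` for all `ξ, η ∈ C` and `t ∈ [0,1]`. -/
def LevelConvexOn {n : ℕ} (C : Set (EuclideanSpace ℝ (Fin n)))
    (f : EuclideanSpace ℝ (Fin n) → ℝ) : Prop :=
  ∀ ξ ∈ C, ∀ η ∈ C, ∀ t ∈ Set.Icc (0 : ℝ) 1,
    f (t • ξ + (1 - t) • η) ≤ max (f ξ) (f η)

/-- A level convex function `f` on a convex set `C ⊆ ℝⁿ` is *strictly level convex on `C`*
if `f (t ξ + (1-t) η) < max (f ξ) (f η)` for every `t ∈ (0,1)` and all `ξ ≠ η` in `C`. -/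
def StrictLevelConvexOn {n : ℕ} (C : Set (EuclideanSpace ℝ (Fin n)))
    (f : EuclideanSpace ℝ (Fin n) → ℝ) : Prop :=
  LevelConvexOn C f ∧
    ∀ ξ ∈ C, ∀ η ∈ C, ξ ≠ η → ∀ t ∈ Set.Ioo (0 : ℝ) 1,
      f (t • ξ + (1 - t) • η) < max (f ξ) (f η)

/-!
A strictly quasiconvex function has convex sublevel sets, and a point `x` of the level set
`{f = c}` cannot lie strictly inside a segment `[y, z]` of the sublevel set `{f ≤ c}` with
`y ≠ z`, since then `f x < max (f y) (f z) ≤ c`. Conversely, if `f (a • x + b • y)` reached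
`c = max (f x) (f y)` for `x ≠ y`, that point would be an extreme point of `{f ≤ c}` lying
strictly between `x` and `y`. Only sublevel sets at values in the range are ever needed, namely
at `max (f x) (f y)`.
-/

lemma max_mem_image_of_mem {α β : Type*} [LinearOrder β] {f : α → β} {s : Set α} {x y : α}
    (hx : x ∈ s) (hy : y ∈ s) : max (f x) (f y) ∈ f '' s :=
  (max_choice (f x) (f y)).elim (fun h ↦ ⟨x, hx, h.symm⟩) fun h ↦ ⟨y, hy, h.symm⟩

section Quasiconvex

variable {𝕜 E β : Type*} [Semiring 𝕜] [PartialOrder 𝕜] [AddCommMonoid E] [Module 𝕜 E]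
  [LinearOrder β] {s : Set E} {f : E → β}

variable (𝕜) in
def StrictQuasiconvexOn (s : Set E) (f : E → β) : Prop :=
  Convex 𝕜 s ∧ ∀ ⦃x⦄, x ∈ s → ∀ ⦃y⦄, y ∈ s → x ≠ y → ∀ ⦃a b : 𝕜⦄, 0 < a → 0 < b → a + b = 1 →
    f (a • x + b • y) < max (f x) (f y)

theorem quasiconvexOn_iff_convex_sublevel_image :
    QuasiconvexOn 𝕜 s f ↔ ∀ c ∈ f '' s, Convex 𝕜 {x ∈ s | f x ≤ c} := by
  refine ⟨fun hf c _ ↦ hf c, fun h r x hx y hy a b ha hb hab ↦ ?_⟩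
  have hmax := h _ (max_mem_image_of_mem hx.1 hy.1) ⟨hx.1, le_max_left _ _⟩
    ⟨hy.1, le_max_right _ _⟩ ha hb hab
  exact ⟨hmax.1, hmax.2.trans (max_le hx.2 hy.2)⟩

theorem StrictQuasiconvexOn.quasiconvexOn (hf : StrictQuasiconvexOn 𝕜 s f) :
    QuasiconvexOn 𝕜 s f := by
  refine quasiconvexOn_iff_le_max.2 ⟨hf.1, fun x hx y hy a b ha hb hab ↦ ?_⟩
  rcases eq_or_ne x y with rfl | hxy
  · rw [Convex.combo_self hab]
    exact le_max_left _ _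
  rcases ha.eq_or_lt with rfl | ha
  · obtain rfl : b = 1 := by simpa using hab
    simp
  rcases hb.eq_or_lt with rfl | hb
  · obtain rfl : a = 1 := by simpa using hab
    simp
  exact (hf.2 hx hy hxy ha hb hab).le

theorem StrictQuasiconvexOn.level_subset_extremePoints (hf : StrictQuasiconvexOn 𝕜 s f) (c : β) :
    {x ∈ s | f x = c} ⊆ extremePoints 𝕜 {x ∈ s | f x ≤ c} := by
  rintro x ⟨hxs, rfl⟩
  refine ⟨⟨hxs, le_rfl⟩, fun y hy z hz ⟨a, b, ha, hb, hab, hx⟩ ↦ ?_⟩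
  subst hx
  rcases eq_or_ne y z with rfl | hyz
  · exact (Convex.combo_self hab y).symm
  exact absurd (hf.2 hy.1 hz.1 hyz ha hb hab) (max_le hy.2 hz.2).not_gt

theorem QuasiconvexOn.strictQuasiconvexOn_of_level_subset_extremePoints
    (hf : QuasiconvexOn 𝕜 s f)
    (h : ∀ c ∈ f '' s, {x ∈ s | f x = c} ⊆ extremePoints 𝕜 {x ∈ s | f x ≤ c}) :
    StrictQuasiconvexOn 𝕜 s f := by
  obtain ⟨hs, hle⟩ := quasiconvexOn_iff_le_max.1 hf
  refine ⟨hs, fun x hx y hy hxy a b ha hb hab ↦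
    (hle hx hy ha.le hb.le hab).lt_of_ne fun heq ↦ hxy ?_⟩
  have hext := h _ (max_mem_image_of_mem hx hy) ⟨hs hx hy ha.le hb.le hab, heq⟩
  obtain ⟨hxz, hyz⟩ := (mem_extremePoints.1 hext).2 x ⟨hx, le_max_left _ _⟩
    y ⟨hy, le_max_right _ _⟩ ⟨a, b, ha, hb, hab, rfl⟩
  exact hxz.trans hyz.symm

theorem strictQuasiconvexOn_iff_quasiconvexOn_and_level_subset_extremePoints :
    StrictQuasiconvexOn 𝕜 s f ↔ QuasiconvexOn 𝕜 s f ∧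
      ∀ c ∈ f '' s, {x ∈ s | f x = c} ⊆ extremePoints 𝕜 {x ∈ s | f x ≤ c} :=
  ⟨fun hf ↦ ⟨hf.quasiconvexOn, fun c _ ↦ hf.level_subset_extremePoints c⟩,
    fun h ↦ h.1.strictQuasiconvexOn_of_level_subset_extremePoints h.2⟩

end Quasiconvex

theorem strictLevelConvexOn_iff_strictQuasiconvexOn {n : ℕ} {C : Set (EuclideanSpace ℝ (Fin n))}
    (hC : Convex ℝ C) {f : EuclideanSpace ℝ (Fin n) → ℝ} :
    StrictLevelConvexOn C f ↔ StrictQuasiconvexOn ℝ C f := by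
  refine ⟨fun h ↦ ⟨hC, fun x hx y hy hxy a b ha hb hab ↦ ?_⟩,
    fun h ↦ ⟨fun ξ hξ η hη t ht ↦ ?_, fun ξ hξ η hη hne t ht ↦ ?_⟩⟩
  · obtain rfl : b = 1 - a := eq_sub_of_add_eq' hab
    exact h.2 x hx y hy hxy a ⟨ha, sub_pos.1 hb⟩
  · exact (quasiconvexOn_iff_le_max.1 h.quasiconvexOn).2 hξ hη ht.1 (sub_nonneg.2 ht.2)
      (add_sub_cancel _ _)
  · exact h.2 hξ hη hne ht.1 (sub_pos.2 ht.2) (add_sub_cancel _ _)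

/-- `f` is strictly level convex on a convex set `C` if and only if, for every `c` in the
range of `f` on `C`, the sublevel set `L_c(f) = {x ∈ C : f x ≤ c}` is convex and the
level set `R_c(f) = {x ∈ C : f x = c}` consists of extreme points of `L_c(f)`. -/
theorem strictLevelConvexOn_iff_extremePoints {n : ℕ}
    (C : Set (EuclideanSpace ℝ (Fin n))) (hC : Convex ℝ C)
    (f : EuclideanSpace ℝ (Fin n) → ℝ) :
    StrictLevelConvexOn C f ↔
      ∀ c ∈ f '' C,
        Convex ℝ {x ∈ C | f x ≤ c} ∧
        {x ∈ C | f x = c} ⊆ Set.extremePoints ℝ {x ∈ C | f x ≤ c} := by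
  rw [strictLevelConvexOn_iff_strictQuasiconvexOn hC,
    strictQuasiconvexOn_iff_quasiconvexOn_and_level_subset_extremePoints,
    quasiconvexOn_iff_convex_sublevel_image, forall₂_and]
end

section
/- Let Ω ⊂ ℝ be a nonempty bounded open set and let f : ℝ → ℝ be a continuous function such that f(ξ) ≥ γ(|ξ|) for all ξ, where γ : [0,∞) → [0,∞) is continuous, increasing, and γ(t) → +∞ as t → +∞. Then for every Lipschitz function u₀ : ℝ → ℝ there exists a Lipschitz function u : ℝ → ℝ with u(x) = u₀(x) for all x ∉ Ω such that ess sup_{x∈Ω} f(u'(x)) ≤ ess sup_{x∈Ω} f(v'(x)) for every Lipschitz v : ℝ → ℝ with v(x) = u₀(x) for all x ∉ Ω; i.e., the supremal minimization problem in dimension one always admits a solution. -/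
/-!
On a component `(a, b)` of `Ω` every competitor `v` has the mean slope `s` of `u₀`, and
`v b - v a = ∫ v'`. So `v'` cannot a.e. avoid a neighbourhood of `[s, ∞)`: whenever
`f ∘ v' ≤ M` a.e., some `η₂ ≥ s` has `f η₂ ≤ M`, and likewise some `η₁ ≤ s`. Hence the essential
supremum of `f ∘ v'` over `(a, b)` is at least the minimum of `max (f ξ₁) (f ξ₂)` over
`ξ₁ ≤ s ≤ ξ₂`, which coercivity makes attained, and the piecewise affine function with slopes `ξ₁`
then `ξ₂` joining `u₀ a` to `u₀ b` realises it. As `|s| ≤ Lip u₀`, coercivity also bounds the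
optimal slopes uniformly, so gluing these functions to `u₀` off `Ω` gives a Lipschitz minimizer.
-/

open Set MeasureTheory Filter
open scoped NNReal Topology

namespace LipschitzWith

variable {g v : ℝ → ℝ} {K : ℝ≥0} {a b : ℝ}

theorem abs_slope_le (hg : LipschitzWith K g) (x y : ℝ) : |slope g x y| ≤ K := by
  rw [slope_def_field, abs_div]
  exact div_le_of_le_mul₀ (abs_nonneg _) K.coe_nonneg
    (by simpa [Real.dist_eq] using hg.dist_le_mul y x)

theorem sub_le_mul_of_ae_deriv_le {c : ℝ} (hv : LipschitzWith K v) (hab : a ≤ b)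
    (h : ∀ᵐ x ∂volume.restrict (Ioo a b), deriv v x ≤ c) : v b - v a ≤ c * (b - a) := by
  have hac := (hv.lipschitzOnWith (s := uIcc a b)).absolutelyContinuousOnInterval
  rw [← hac.integral_deriv_eq_sub, mul_comm, ← smul_eq_mul, ← intervalIntegral.integral_const]
  refine intervalIntegral.integral_mono_ae_restrict hab hac.intervalIntegrable_deriv
    intervalIntegrable_const ?_
  rwa [Measure.restrict_congr_set Ioo_ae_eq_Icc] at h

theorem exists_slope_le_of_ae_le {f : ℝ → ℝ} {M : ℝ} (hf : Continuous f) (hv : LipschitzWith K v)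
    (hab : a < b) (hM : ∀ᵐ x ∂volume.restrict (Ioo a b), f (deriv v x) ≤ M) :
    ∃ ξ, slope v a b ≤ ξ ∧ f ξ ≤ M := by
  by_contra! h
  -- `f > M` on `[s, ∞)`, hence, as `{f > M}` is open, on `(s - ε, ∞)`
  obtain ⟨ε, hε, hball⟩ := Metric.isOpen_iff.1 (isOpen_lt continuous_const hf) _ (h _ le_rfl)
  have hderiv : ∀ᵐ x ∂volume.restrict (Ioo a b), deriv v x ≤ slope v a b - ε := by
    filter_upwards [hM] with x hx
    by_contra! hlt
    rcases le_or_gt (slope v a b) (deriv v x) with hs | hs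
    · exact (h _ hs).not_ge hx
    · refine (hball ?_ : M < f (deriv v x)).not_ge hx
      rw [Metric.mem_ball, Real.dist_eq, abs_lt]
      constructor <;> linarith
  have hmean := sub_smul_slope v a b
  rw [smul_eq_mul, vsub_eq_sub] at hmean
  nlinarith [hv.sub_le_mul_of_ae_deriv_le hab.le hderiv]

theorem exists_le_slope_of_ae_le {f : ℝ → ℝ} {M : ℝ} (hf : Continuous f) (hv : LipschitzWith K v)
    (hab : a < b) (hM : ∀ᵐ x ∂volume.restrict (Ioo a b), f (deriv v x) ≤ M) :
    ∃ ξ, ξ ≤ slope v a b ∧ f ξ ≤ M := by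
  obtain ⟨ξ, hξ, hfξ⟩ := hv.neg.exists_slope_le_of_ae_le (f := fun ξ => f (-ξ))
    (hf.comp continuous_neg) hab (by simpa only [deriv.neg, neg_neg] using hM)
  exact ⟨-ξ, by rw [slope_neg_fun, Pi.neg_apply, Pi.neg_apply] at hξ; linarith, hfξ⟩

end LipschitzWith

def IsOptimalSlopePair (f : ℝ → ℝ) (s ξ₁ ξ₂ : ℝ) : Prop :=
  ξ₁ ≤ s ∧ s ≤ ξ₂ ∧ ∀ η₁ η₂, η₁ ≤ s → s ≤ η₂ → max (f ξ₁) (f ξ₂) ≤ max (f η₁) (f η₂)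

theorem exists_isOptimalSlopePair {f : ℝ → ℝ} {C R s : ℝ} (hf : Continuous f)
    (hR : ∀ t, R < |t| → C < f t) (hs : |s| ≤ R) (hfs : f s ≤ C) :
    ∃ ξ₁ ξ₂, IsOptimalSlopePair f s ξ₁ ξ₂ ∧ |ξ₁| ≤ R ∧ |ξ₂| ≤ R := by
  obtain ⟨hRs, hsR⟩ := abs_le.1 hs
  have hss : (s, s) ∈ Icc (-R) s ×ˢ Icc s R := ⟨⟨hRs, le_rfl⟩, ⟨le_rfl, hsR⟩⟩
  obtain ⟨p, ⟨⟨hp₁, hps⟩, ⟨hsp, hp₂⟩⟩, hmin⟩ := (isCompact_Icc.prod isCompact_Icc).exists_isMinOn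
    ⟨_, hss⟩ ((hf.comp continuous_fst).max (hf.comp continuous_snd)).continuousOn
  refine ⟨p.1, p.2, ⟨hps, hsp, fun η₁ η₂ h₁ h₂ => ?_⟩, abs_le.2 ⟨hp₁, hps.trans hsR⟩,
    abs_le.2 ⟨hRs.trans hsp, hp₂⟩⟩
  -- outside the box one of the slopes exceeds `R` in modulus, so `max (f η₁) (f η₂) > C ≥ f s`
  have hpC : max (f p.1) (f p.2) ≤ C := (hmin hss).trans (by simpa using hfs)
  rcases lt_or_ge R |η₁| with h | h
  · exact hpC.trans (le_max_of_le_left (hR η₁ h).le)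
  rcases lt_or_ge R |η₂| with h' | h'
  · exact hpC.trans (le_max_of_le_right (hR η₂ h').le)
  exact hmin (show (η₁, η₂) ∈ Icc (-R) s ×ˢ Icc s R from
    ⟨⟨(abs_le.1 h).1, h₁⟩, h₂, (abs_le.1 h').2⟩)

theorem exists_uniform_isOptimalSlopePair {f : ℝ → ℝ} (hf : Continuous f)
    (hcoer : Tendsto f (cocompact ℝ) atTop) (K : ℝ) :
    ∃ R : ℝ≥0, ∀ s, |s| ≤ K → ∃ ξ₁ ξ₂, IsOptimalSlopePair f s ξ₁ ξ₂ ∧ ‖ξ₁‖₊ ≤ R ∧ ‖ξ₂‖₊ ≤ R := by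
  obtain ⟨C, hC⟩ := ((isCompact_Icc (a := -K) (b := K)).image hf).bddAbove
  obtain ⟨S, hS, hfS⟩ := hasBasis_cocompact.eventually_iff.1 (hcoer.eventually_gt_atTop C)
  obtain ⟨r, hr⟩ := hS.isBounded.subset_closedBall 0
  refine ⟨(max r K).toNNReal, fun s hs => ?_⟩
  have hR : ∀ t, max r K < |t| → C < f t := fun t ht =>
    hfS fun htS => ht.not_ge (le_max_of_le_left (by simpa using hr htS))
  obtain ⟨ξ₁, ξ₂, hopt, h₁, h₂⟩ := exists_isOptimalSlopePair hf hR (hs.trans (le_max_right _ _))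
    (hC ⟨s, abs_le.1 hs, rfl⟩)
  refine ⟨ξ₁, ξ₂, hopt, ?_, ?_⟩ <;>
    rw [← NNReal.coe_le_coe, coe_nnnorm, Real.norm_eq_abs, Real.coe_toNNReal']
  exacts [le_max_of_le_left h₁, le_max_of_le_left h₂]

theorem IsOptimalSlopePair.le_essSup {f v : ℝ → ℝ} {K : ℝ≥0} {a b ξ₁ ξ₂ : ℝ}
    (hopt : IsOptimalSlopePair f (slope v a b) ξ₁ ξ₂) (hf : Continuous f) (hv : LipschitzWith K v)
    (hab : a < b) :
    ((max (f ξ₁) (f ξ₂) : ℝ) : EReal) ≤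
      essSup (fun x => (f (deriv v x) : EReal)) (volume.restrict (Ioo a b)) := by
  refine le_of_forall_gt_imp_ge_of_dense fun M hM => ?_
  induction M using EReal.rec with
  | bot => exact absurd hM not_lt_bot
  | top => exact le_top
  | coe M =>
    have hae : ∀ᵐ x ∂volume.restrict (Ioo a b), f (deriv v x) ≤ M := by
      filter_upwards [ae_lt_of_essSup_lt hM] with x hx
      exact_mod_cast hx.le
    obtain ⟨η₁, h₁, hf₁⟩ := hv.exists_le_slope_of_ae_le hf hab hae
    obtain ⟨η₂, h₂, hf₂⟩ := hv.exists_slope_le_of_ae_le hf hab hae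
    exact_mod_cast (hopt.2.2 η₁ η₂ h₁ h₂).trans (max_le hf₁ hf₂)

def twoSlope (A a c ξ₁ ξ₂ : ℝ) (x : ℝ) : ℝ :=
  A + ξ₁ * (min x c - a) + ξ₂ * (max x c - c)

section twoSlope

variable {A a c ξ₁ ξ₂ x : ℝ}

theorem twoSlope_of_le (h : x ≤ c) : twoSlope A a c ξ₁ ξ₂ x = A + ξ₁ * (x - a) := by
  simp [twoSlope, h]

theorem twoSlope_of_ge (h : c ≤ x) :
    twoSlope A a c ξ₁ ξ₂ x = A + ξ₁ * (c - a) + ξ₂ * (x - c) := by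
  simp [twoSlope, h]

theorem lipschitzWith_twoSlope : LipschitzWith (‖ξ₁‖₊ + ‖ξ₂‖₊) (twoSlope A a c ξ₁ ξ₂) := by
  have h := ((lipschitzWith_smul ξ₁).comp (LipschitzWith.id.min_const c)).add
    ((lipschitzWith_smul ξ₂).comp (LipschitzWith.id.max_const c))
  simp only [mul_one] at h
  refine LipschitzWith.of_dist_le_mul fun x y => ?_
  calc dist (twoSlope A a c ξ₁ ξ₂ x) (twoSlope A a c ξ₁ ξ₂ y)
      = dist (ξ₁ • min x c + ξ₂ • max x c) (ξ₁ • min y c + ξ₂ • max y c) := by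
        simp only [twoSlope, Real.dist_eq, smul_eq_mul]; ring_nf
    _ ≤ _ := h.dist_le_mul x y

theorem deriv_twoSlope_eq_or (hx : DifferentiableAt ℝ (twoSlope A a c ξ₁ ξ₂) x) :
    deriv (twoSlope A a c ξ₁ ξ₂) x = ξ₁ ∨ deriv (twoSlope A a c ξ₁ ξ₂) x = ξ₂ := by
  rcases le_total x c with hxc | hcx
  · have h : HasDerivAt (fun y => A + ξ₁ * (y - a)) ξ₁ x := by
      simpa using (((hasDerivAt_id x).sub_const a).const_mul ξ₁).const_add A
    left
    rw [← hx.derivWithin (uniqueDiffWithinAt_Iic x)]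
    exact ((h.hasDerivWithinAt (s := Iic x)).congr_of_mem
      (fun y (hy : y ≤ x) => twoSlope_of_le (hy.trans hxc)) (mem_Iic.2 le_rfl)).derivWithin
      (uniqueDiffWithinAt_Iic x)
  · have h : HasDerivAt (fun y => A + ξ₁ * (c - a) + ξ₂ * (y - c)) ξ₂ x := by
      simpa using (((hasDerivAt_id x).sub_const c).const_mul ξ₂).const_add (A + ξ₁ * (c - a))
    right
    rw [← hx.derivWithin (uniqueDiffWithinAt_Ici x)]
    exact ((h.hasDerivWithinAt (s := Ici x)).congr_of_mem
      (fun y (hy : x ≤ y) => twoSlope_of_ge (hcx.trans hy)) (mem_Ici.2 le_rfl)).derivWithin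
      (uniqueDiffWithinAt_Ici x)

end twoSlope

theorem exists_twoSlope_interpolant {g : ℝ → ℝ} {a b ξ₁ ξ₂ : ℝ} (hab : a < b)
    (h₁ : ξ₁ ≤ slope g a b) (h₂ : slope g a b ≤ ξ₂) :
    ∃ c, twoSlope (g a) a c ξ₁ ξ₂ a = g a ∧ twoSlope (g a) a c ξ₁ ξ₂ b = g b := by
  have hmean := sub_smul_slope g a b
  rw [smul_eq_mul, vsub_eq_sub] at hmean
  have hcont : ContinuousOn (fun c => twoSlope (g a) a c ξ₁ ξ₂ b) (Icc a b) := by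
    unfold twoSlope; fun_prop
  have hgb : g b ∈ Icc (twoSlope (g a) a b ξ₁ ξ₂ b) (twoSlope (g a) a a ξ₁ ξ₂ b) := by
    rw [twoSlope_of_ge le_rfl, twoSlope_of_ge hab.le]
    constructor <;> nlinarith
  obtain ⟨c, ⟨hac, -⟩, hc⟩ := intermediate_value_Icc' hab.le hcont hgb
  exact ⟨c, by rw [twoSlope_of_le hac]; ring, hc⟩

theorem IsOptimalSlopePair.exists_minimizer_Ioo {f g : ℝ → ℝ} {a b ξ₁ ξ₂ : ℝ}
    (hopt : IsOptimalSlopePair f (slope g a b) ξ₁ ξ₂) (hf : Continuous f) (hab : a < b) :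
    ∃ w : ℝ → ℝ, LipschitzWith (‖ξ₁‖₊ + ‖ξ₂‖₊) w ∧ w a = g a ∧ w b = g b ∧
      ∀ x, DifferentiableAt ℝ w x → ∀ (v : ℝ → ℝ) (K : ℝ≥0), LipschitzWith K v →
        v a = g a → v b = g b →
        (f (deriv w x) : EReal) ≤
          essSup (fun y => (f (deriv v y) : EReal)) (volume.restrict (Ioo a b)) := by
  obtain ⟨c, hca, hcb⟩ := exists_twoSlope_interpolant hab hopt.1 hopt.2.1
  refine ⟨_, lipschitzWith_twoSlope, hca, hcb, fun x hx v K hv hva hvb => ?_⟩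
  have hslope : slope g a b = slope v a b := by simp only [slope_def_field, hva, hvb]
  calc (f (deriv (twoSlope (g a) a c ξ₁ ξ₂) x) : EReal) ≤ ((max (f ξ₁) (f ξ₂) : ℝ) : EReal) := by
        rcases deriv_twoSlope_eq_or hx with h | h <;> rw [h] <;> exact_mod_cast (by simp)
    _ ≤ _ := (hslope ▸ hopt).le_essSup hf hv hab

theorem exists_mem_Ioo_subset_of_isOpen_of_isBounded {Ω : Set ℝ} (hΩo : IsOpen Ω)
    (hΩb : Bornology.IsBounded Ω) {x : ℝ} (hx : x ∈ Ω) :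
    ∃ a b, x ∈ Ioo a b ∧ Ioo a b ⊆ Ω ∧ a ∉ Ω ∧ b ∉ Ω := by
  obtain ⟨m, hm⟩ := hΩb.bddBelow
  obtain ⟨M, hM⟩ := hΩb.bddAbove
  have hbelow : BddAbove (Ωᶜ ∩ Iic x) := ⟨x, fun _ hy => hy.2⟩
  have habove : BddBelow (Ωᶜ ∩ Ici x) := ⟨x, fun _ hy => hy.2⟩
  have ha := (hΩo.isClosed_compl.inter isClosed_Iic).csSup_mem
    ⟨m - 1, fun h => by linarith [hm h], mem_Iic.2 (by linarith [hm hx])⟩ hbelow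
  have hb := (hΩo.isClosed_compl.inter isClosed_Ici).csInf_mem
    ⟨M + 1, fun h => by linarith [hM h], mem_Ici.2 (by linarith [hM hx])⟩ habove
  refine ⟨_, _,
    ⟨ha.2.lt_of_ne fun h => ha.1 (by rwa [h]), hb.2.lt_of_ne' fun h => hb.1 (by rwa [h])⟩,
    fun y hy => by_contra fun hyΩ => ?_, ha.1, hb.1⟩
  rcases le_total y x with h | h
  · exact hy.1.not_ge (le_csSup hbelow ⟨hyΩ, h⟩)
  · exact hy.2.not_ge (csInf_le habove ⟨hyΩ, h⟩)

theorem Ioo_endpoints_eq_of_mem {Ω : Set ℝ} {a b a' b' x : ℝ} (h : Ioo a b ⊆ Ω) (ha : a ∉ Ω)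
    (hb : b ∉ Ω) (h' : Ioo a' b' ⊆ Ω) (ha' : a' ∉ Ω) (hb' : b' ∉ Ω) (hx : x ∈ Ioo a b)
    (hx' : x ∈ Ioo a' b') : a = a' ∧ b = b' :=
  ⟨le_antisymm (not_lt.1 fun hlt => ha (h' ⟨hlt, hx.1.trans hx'.2⟩))
      (not_lt.1 fun hlt => ha' (h ⟨hlt, hx'.1.trans hx.2⟩)),
    le_antisymm (not_lt.1 fun hlt => hb' (h ⟨hx.1.trans hx'.2, hlt⟩))
      (not_lt.1 fun hlt => hb (h' ⟨hx'.1.trans hx.2, hlt⟩))⟩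

theorem LipschitzOnWith.union_Icc {u : ℝ → ℝ} {L : ℝ≥0} {s : Set ℝ} {a b : ℝ}
    (hs : LipschitzOnWith L u s) (hI : LipschitzOnWith L u (Icc a b)) (ha : a ∈ s)
    (hb : b ∈ s) : LipschitzOnWith L u (s ∪ Icc a b) := by
  have hchain : ∀ {x p y : ℝ}, x ≤ p → p ≤ y → dist (u x) (u p) ≤ L * dist x p →
      dist (u p) (u y) ≤ L * dist p y → dist (u x) (u y) ≤ L * dist x y := by
    intro x p y hxp hpy h₁ h₂
    have hsplit : dist x p + dist p y = dist x y :=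
      dist_add_dist_of_mem_segment (by rw [segment_eq_Icc (hxp.trans hpy)]; exact ⟨hxp, hpy⟩)
    calc dist (u x) (u y) ≤ dist (u x) (u p) + dist (u p) (u y) := dist_triangle _ _ _
      _ ≤ L * dist x p + L * dist p y := add_le_add h₁ h₂
      _ = L * dist x y := by rw [← mul_add, hsplit]
  have key : ∀ x ∈ s, ∀ y ∈ Icc a b, dist (u x) (u y) ≤ L * dist x y := by
    intro x hx y hy
    have hab : a ≤ b := hy.1.trans hy.2
    rcases lt_or_ge x a with hxa | hax
    · exact hchain hxa.le hy.1 (hs.dist_le_mul x hx a ha) (hI.dist_le_mul a ⟨le_rfl, hab⟩ y hy)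
    rcases le_or_gt x b with hxb | hbx
    · exact hI.dist_le_mul x ⟨hax, hxb⟩ y hy
    · rw [dist_comm, dist_comm x]
      exact hchain hy.2 hbx.le (hI.dist_le_mul y hy b ⟨hab, le_rfl⟩)
        (by rw [dist_comm, dist_comm b]; exact hs.dist_le_mul x hx b hb)
  refine LipschitzOnWith.of_dist_le_mul ?_
  rintro x (hx | hx) y (hy | hy)
  · exact hs.dist_le_mul x hx y hy
  · exact key x hx y hy
  · rw [dist_comm, dist_comm x]
    exact key y hy x hx
  · exact hI.dist_le_mul x hx y hy

theorem exists_lipschitzWith_eqOn_Ioo {Ω : Set ℝ} (hΩo : IsOpen Ω) (hΩb : Bornology.IsBounded Ω)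
    {L : ℝ≥0} {u₀ : ℝ → ℝ} (hu₀ : LipschitzWith L u₀) {w : ℝ → ℝ → ℝ → ℝ}
    (hwL : ∀ a b, a < b → LipschitzWith L (w a b)) (hwa : ∀ a b, a < b → w a b a = u₀ a)
    (hwb : ∀ a b, a < b → w a b b = u₀ b) :
    ∃ u : ℝ → ℝ, LipschitzWith L u ∧ (∀ x ∉ Ω, u x = u₀ x) ∧
      ∀ x ∈ Ω, ∃ a b, x ∈ Ioo a b ∧ Ioo a b ⊆ Ω ∧ a ∉ Ω ∧ b ∉ Ω ∧ EqOn u (w a b) (Ioo a b) := by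
  classical
  choose! A B hAB hsub hA hB using fun x (hx : x ∈ Ω) =>
    exists_mem_Ioo_subset_of_isOpen_of_isBounded hΩo hΩb hx
  set u : ℝ → ℝ := fun z => if z ∈ Ω then w (A z) (B z) z else u₀ z
  have hout : ∀ x ∉ Ω, u x = u₀ x := fun x hx => if_neg hx
  have hin : ∀ x ∈ Ω, EqOn u (w (A x) (B x)) (Icc (A x) (B x)) := by
    intro x hx y hy
    have hlt := (hAB x hx).1.trans (hAB x hx).2
    rcases eq_endpoints_or_mem_Ioo_of_mem_Icc hy with rfl | rfl | hy'
    · rw [hout _ (hA x hx), hwa _ _ hlt]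
    · rw [hout _ (hB x hx), hwb _ _ hlt]
    · have hyΩ := hsub x hx hy'
      obtain ⟨hAy, hBy⟩ := Ioo_endpoints_eq_of_mem (hsub y hyΩ) (hA y hyΩ) (hB y hyΩ)
        (hsub x hx) (hA x hx) (hB x hx) (hAB y hyΩ) hy'
      simp only [u, if_pos hyΩ, hAy, hBy]
  refine ⟨u, ?_, hout, fun x hx => ⟨A x, B x, hAB x hx, hsub x hx, hA x hx, hB x hx,
    (hin x hx).mono Ioo_subset_Icc_self⟩⟩
  have hΩc : LipschitzOnWith L u Ωᶜ := fun x hx y hy => by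
    rw [hout x hx, hout y hy]; exact hu₀ x y
  have hcover : ∀ x, ∃ a b, a ∉ Ω ∧ b ∉ Ω ∧ x ∈ Icc a b ∧ LipschitzOnWith L u (Icc a b) := by
    intro x
    by_cases hx : x ∈ Ω
    · refine ⟨A x, B x, hA x hx, hB x hx, Ioo_subset_Icc_self (hAB x hx), fun y hy z hz => ?_⟩
      rw [hin x hx hy, hin x hx hz]
      exact hwL _ _ ((hAB x hx).1.trans (hAB x hx).2) y z
    · exact ⟨x, x, hx, hx, left_mem_Icc.2 le_rfl, hΩc.mono (by simpa using hx)⟩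
  intro x y
  obtain ⟨a, b, ha, hb, hx, hL⟩ := hcover x
  obtain ⟨a', b', ha', hb', hy, hL'⟩ := hcover y
  exact ((hΩc.union_Icc hL ha hb).union_Icc hL' (Or.inl ha') (Or.inl hb'))
    (Or.inl (Or.inr hx)) (Or.inr hy)

theorem exists_minimizer_dim_one_general
    (Ω : Set ℝ) (hΩo : IsOpen Ω) (hΩb : Bornology.IsBounded Ω)
    (f : ℝ → ℝ) (hf : Continuous f)
    (γ : ℝ → ℝ)
    (hγtop : Tendsto γ atTop atTop)
    (hcoer : ∀ ξ : ℝ, γ |ξ| ≤ f ξ)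
    (u₀ : ℝ → ℝ) (K₀ : ℝ≥0) (hu₀ : LipschitzWith K₀ u₀) :
    ∃ (u : ℝ → ℝ) (K : ℝ≥0), LipschitzWith K u ∧ (∀ x ∉ Ω, u x = u₀ x) ∧
      ∀ (v : ℝ → ℝ) (K' : ℝ≥0), LipschitzWith K' v → (∀ x ∉ Ω, v x = u₀ x) →
        essSup (fun x => (f (deriv u x) : EReal)) (volume.restrict Ω) ≤
          essSup (fun x => (f (deriv v x) : EReal)) (volume.restrict Ω) := by
  obtain ⟨R, hR⟩ := exists_uniform_isOptimalSlopePair hf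
    (tendsto_atTop_mono hcoer (hγtop.comp tendsto_norm_cocompact_atTop)) K₀
  have hw : ∀ a b, a < b → ∃ w : ℝ → ℝ, LipschitzWith (K₀ + (R + R)) w ∧ w a = u₀ a ∧
      w b = u₀ b ∧ ∀ x, DifferentiableAt ℝ w x → ∀ (v : ℝ → ℝ) (K : ℝ≥0), LipschitzWith K v →
        v a = u₀ a → v b = u₀ b → (f (deriv w x) : EReal) ≤
          essSup (fun y => (f (deriv v y) : EReal)) (volume.restrict (Ioo a b)) := by
    intro a b hab
    obtain ⟨ξ₁, ξ₂, hopt, h₁, h₂⟩ := hR _ (hu₀.abs_slope_le a b)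
    obtain ⟨w, hwL, hw⟩ := hopt.exists_minimizer_Ioo hf hab
    exact ⟨w, hwL.weaken (le_add_left (add_le_add h₁ h₂)), hw⟩
  choose! w hwL hwa hwb hw using hw
  obtain ⟨u, hu, hu₀Ω, hloc⟩ :=
    exists_lipschitzWith_eqOn_Ioo hΩo hΩb (hu₀.weaken le_self_add) hwL hwa hwb
  refine ⟨u, _, hu, hu₀Ω, fun v K hv hv₀ => essSup_le_of_ae_le _ ?_⟩
  filter_upwards [ae_restrict_mem hΩo.measurableSet, ae_restrict_of_ae hu.ae_differentiableAt]
    with z hz hdz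
  obtain ⟨a, b, hzab, hsub, ha, hb, heq⟩ := hloc z hz
  have hev : u =ᶠ[𝓝 z] w a b := heq.eventuallyEq_of_mem (isOpen_Ioo.mem_nhds hzab)
  calc (f (deriv u z) : EReal) = f (deriv (w a b) z) := by rw [hev.deriv_eq]
    _ ≤ essSup (fun y => (f (deriv v y) : EReal)) (volume.restrict (Ioo a b)) :=
      hw a b (hzab.1.trans hzab.2) z (hev.differentiableAt_iff.1 hdz) v K hv (hv₀ a ha) (hv₀ b hb)
    _ ≤ _ := essSup_mono_measure
      (Measure.absolutelyContinuous_of_le (Measure.restrict_mono hsub le_rfl))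

/-- Existence of solutions in dimension one: if `Ω ⊂ ℝ` is a nonempty bounded open set
and `f : ℝ → ℝ` is continuous with `f ξ ≥ γ(|ξ|)` for a continuous increasing coercive
`γ : [0,∞) → [0,∞)`, then for every Lipschitz boundary datum `u₀ : ℝ → ℝ` the problem
`inf { ess sup_{x∈Ω} f (u' x) : u Lipschitz, u = u₀ outside Ω }` admits a solution. -/
theorem exists_minimizer_dim_one
    (Ω : Set ℝ) (hne : Ω.Nonempty) (hΩo : IsOpen Ω) (hΩb : Bornology.IsBounded Ω)
    (f : ℝ → ℝ) (hf : Continuous f)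
    (γ : ℝ → ℝ) (hγcont : ContinuousOn γ (Set.Ici 0))
    (hγmono : MonotoneOn γ (Set.Ici 0)) (hγnonneg : ∀ t ∈ Set.Ici (0 : ℝ), 0 ≤ γ t)
    (hγtop : Tendsto γ atTop atTop)
    (hcoer : ∀ ξ : ℝ, γ |ξ| ≤ f ξ)
    (u₀ : ℝ → ℝ) (K₀ : ℝ≥0) (hu₀ : LipschitzWith K₀ u₀) :
    ∃ (u : ℝ → ℝ) (K : ℝ≥0), LipschitzWith K u ∧ (∀ x ∉ Ω, u x = u₀ x) ∧
      ∀ (v : ℝ → ℝ) (K' : ℝ≥0), LipschitzWith K' v → (∀ x ∉ Ω, v x = u₀ x) →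
        essSup (fun x => (f (deriv u x) : EReal)) (volume.restrict Ω) ≤
          essSup (fun x => (f (deriv v x) : EReal)) (volume.restrict Ω) :=
  exists_minimizer_dim_one_general Ω hΩo hΩb f hf γ hγtop hcoer u₀ K₀ hu₀
end
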